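/- Let H_a = (V, E_a) and H_b = (V, E_b) be hypergraphs with Col(H) = ∑_{e ∈ E} U_e. Then Col(H_a) ∩ Col(H_b) = Col(H_{a∧b}), where H_{a∧b} has edge set {e ∩ f : e ∈ E_a, f ∈ E_b, |e ∩ f| ≥ 2}. Consequently Col(H_{a∧b})^⊥ = Col(H_a)^⊥ + Col(H_b)^⊥. -/

import Mathlib

/-!
For `σ ≠ ⊥` let `c σ (P) = [σ ≰ P]` (`notAboveIndicator σ`). These `|Π(V)| - 1 = dim ℝ^{Π*(V)}`
vectors form a basis, and `U_A` is spanned by the `c σ` with `σ` supported in `A` (every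
non-singleton block of `σ` lies in `A`): such a `c σ` is the sum of the `1_{A,π}` over
`π ≱ σ|_A`, and conversely Möbius inversion expresses each `1_{A,π}` through the up-set
indicators `[σ ≤ P] = 1 - c σ`, where the constant term must vanish because `1_{A,π}` vanishes at
a partition restricting to the one-block partition of `A`. So `Col(H)` is the span of the basis
vectors indexed by `⋃_{e ∈ E} {σ | supp σ ⊆ e}`, and spans of parts of a basis intersect like
their index sets: `σ ≠ ⊥` is supported in `e` and in `f` iff it is supported in `e ∩ f`, which
then has at least two points. The second claim is `(K ⊓ L)ᗮ = Kᗮ ⊔ Lᗮ` in finite dimension.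
-/

open Submodule Finset

variable {V : Type*} [Fintype V] [DecidableEq V]

/-- The set of nontrivial partitions `Π*(α)` of `α`, encoded as setoids different from `⊤`
(the one-block partition). -/
def NontrivPart (α : Type*) := {P : Setoid α // P ≠ ⊤}

instance : Finite (Setoid V) :=
  Finite.of_injective (fun s : Setoid V => s.r)
    (fun _ _ h => Setoid.ext fun x y => iff_of_eq (congrFun (congrFun h x) y))

instance : Finite (NontrivPart V) := by unfold NontrivPart; infer_instance

noncomputable instance : Fintype (NontrivPart V) := Fintype.ofFinite _

/-- Restriction `P|_S` of a partition of `V` to a subset `S`: the partition of `S` whose blocks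
are the nonempty intersections of blocks of `P` with `S`. -/
def restrictS (S : Set V) (P : Setoid V) : Setoid ↥S := Setoid.comap Subtype.val P

open Classical in
/-- The indicator function `1_{S,π}`, an element of `ℝ^{Π*(V)}` equipped with its standard
(Euclidean) inner product. -/
noncomputable def ind (S : Set V) (π : Setoid ↥S) : EuclideanSpace ℝ (NontrivPart V) :=
  WithLp.toLp 2 (fun P : NontrivPart V => if restrictS S P.1 = π then 1 else 0)

/-- The subspace `U_S ⊆ ℝ^{Π*(V)}` spanned by the indicators `1_{S,π}` over nontrivial
partitions `π` of `S` (equal to `{0}` when `|S| ≤ 1`). -/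
noncomputable def U (S : Set V) : Submodule ℝ (EuclideanSpace ℝ (NontrivPart V)) :=
  Submodule.span ℝ {f | ∃ π : Setoid ↥S, π ≠ ⊤ ∧ f = ind S π}

/-- The column space `Col(H) = ∑_{e ∈ E} U_e` of a hypergraph with edge set `E`. -/
noncomputable def Col (E : Set (Set V)) : Submodule ℝ (EuclideanSpace ℝ (NontrivPart V)) :=
  ⨆ e ∈ E, U e

open Classical

noncomputable instance {α : Type*} [Fintype α] [DecidableEq α] : Fintype (Setoid α) :=
  Fintype.ofFinite _

namespace Setoid

variable {α : Type*}

def support (σ : Setoid α) : Set α := {x | ∃ y, y ≠ x ∧ σ x y}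

lemma mem_support_of_rel {σ : Setoid α} {x y : α} (h : σ x y) (hxy : x ≠ y) :
    x ∈ σ.support ∧ y ∈ σ.support :=
  ⟨⟨y, hxy.symm, h⟩, ⟨x, hxy, σ.symm h⟩⟩

lemma exists_rel_of_ne_bot {σ : Setoid α} (hσ : σ ≠ ⊥) : ∃ x y, x ≠ y ∧ σ x y := by
  contrapose! hσ
  exact le_bot_iff.mp fun x y hxy => by_contra fun hne => hσ x y hne hxy

lemma two_le_card_of_support_subset [Finite α] {σ : Setoid α} {S : Set α} (hσ : σ ≠ ⊥)
    (hS : σ.support ⊆ S) : 2 ≤ Nat.card S := by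
  obtain ⟨x, y, hxy, hrel⟩ := exists_rel_of_ne_bot hσ
  obtain ⟨hx, hy⟩ := mem_support_of_rel hrel hxy
  have : Nontrivial S := ⟨⟨⟨x, hS hx⟩, ⟨y, hS hy⟩, fun h => hxy (congrArg Subtype.val h)⟩⟩
  exact Finite.one_lt_card

lemma le_iff_comap_le {σ P : Setoid α} {S : Set α} (hS : σ.support ⊆ S) :
    σ ≤ P ↔ σ.comap ((↑) : S → α) ≤ P.comap (↑) := by
  refine ⟨fun h _ _ hab => h hab, fun h x y hxy => ?_⟩
  by_cases hne : x = y
  · exact hne ▸ P.refl x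
  · obtain ⟨hx, hy⟩ := mem_support_of_rel hxy hne
    exact h (x := ⟨x, hS hx⟩) (y := ⟨y, hS hy⟩) hxy

lemma support_map_val_subset {S : Set α} (ρ : Setoid S) : (ρ.map (↑)).support ⊆ S := by
  rintro x ⟨y, hyx, hxy⟩
  rw [coe_map_of_ker_le _ _ (ker_eq_bot_iff.mpr Subtype.val_injective ▸ bot_le)] at hxy
  rcases hxy with ⟨a, -, -, rfl, -⟩ | rfl
  · exact a.2
  · exact absurd rfl hyx

lemma map_val_le_iff {S : Set α} {ρ : Setoid S} {P : Setoid α} :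
    ρ.map (↑) ≤ P ↔ ρ ≤ P.comap (↑) :=
  ⟨fun h => le_comap_map.trans fun _ _ hab => h hab,
    fun h => eqvGen_le fun _ _ ⟨_, _, hab, hx, hy⟩ => hx ▸ hy ▸ h hab⟩

end Setoid

theorem LinearIndepOn.span_image_inter {R M ι : Type*} [Semiring R] [AddCommMonoid M]
    [Module R M] {v : ι → M} {u s t : Set ι} (hv : LinearIndepOn R v u) (hs : s ⊆ u)
    (ht : t ⊆ u) : span R (v '' (s ∩ t)) = span R (v '' s) ⊓ span R (v '' t) := by
  refine le_antisymm (le_inf (span_mono (Set.image_mono Set.inter_subset_left))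
    (span_mono (Set.image_mono Set.inter_subset_right))) ?_
  rintro x ⟨hxs, hxt⟩
  obtain ⟨l, hl, rfl⟩ := (Finsupp.mem_span_image_iff_linearCombination R).mp hxs
  obtain ⟨m, hm, hlm⟩ := (Finsupp.mem_span_image_iff_linearCombination R).mp hxt
  have hml : m = l :=
    linearIndepOn_iffₛ.mp hv m (Finsupp.supported_mono ht hm) l (Finsupp.supported_mono hs hl) hlm
  refine (Finsupp.mem_span_image_iff_linearCombination R).mpr ⟨l, ?_, rfl⟩
  rw [Finsupp.supported_inter]
  exact ⟨hl, hml ▸ hm⟩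

theorem Submodule.orthogonal_inf {𝕜 E : Type*} [RCLike 𝕜] [NormedAddCommGroup E]
    [InnerProductSpace 𝕜 E] [FiniteDimensional 𝕜 E] (K₁ K₂ : Submodule 𝕜 E) :
    (K₁ ⊓ K₂)ᗮ = K₁ᗮ ⊔ K₂ᗮ := by
  rw [← orthogonal_orthogonal (K₁ᗮ ⊔ K₂ᗮ), ← inf_orthogonal, orthogonal_orthogonal,
    orthogonal_orthogonal]

section Indicators

variable {X : Type*}

noncomputable def upIndicator (σ : Setoid X) : EuclideanSpace ℝ (NontrivPart X) :=
  WithLp.toLp 2 fun P => if σ ≤ P.1 then 1 else 0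

noncomputable def notAboveIndicator (σ : Setoid X) : EuclideanSpace ℝ (NontrivPart X) :=
  WithLp.toLp 2 fun P => if σ ≤ P.1 then 0 else 1

lemma upIndicator_eq_sub (σ : Setoid X) :
    upIndicator σ = upIndicator ⊥ - notAboveIndicator σ := by
  refine PiLp.ext fun P => ?_
  by_cases h : σ ≤ P.1 <;> simp [upIndicator, notAboveIndicator, h]

lemma notAboveIndicator_bot : notAboveIndicator (⊥ : Setoid X) = 0 := by
  refine PiLp.ext fun P => ?_
  simp [notAboveIndicator]

lemma notAboveIndicator_top : notAboveIndicator (⊤ : Setoid X) = upIndicator ⊥ := by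
  refine PiLp.ext fun P => ?_
  simp [notAboveIndicator, upIndicator, top_le_iff, P.2]

lemma sum_ind_apply (A : Set X) (s : Finset (Setoid A)) (P : NontrivPart X) :
    (∑ π ∈ s, ind A π) P = if restrictS A P.1 ∈ s then 1 else 0 := by
  simp [ind, WithLp.ofLp_sum, Finset.sum_apply]

lemma upIndicator_map_eq_sum [Fintype X] (A : Set X) (ρ : Setoid A) :
    upIndicator (ρ.map (↑)) = ∑ π ∈ univ.filter (ρ ≤ ·), ind A π := by
  refine PiLp.ext fun P => ?_
  simp [sum_ind_apply, upIndicator, Setoid.map_val_le_iff, restrictS]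

lemma notAboveIndicator_eq_sum [Fintype X] {A : Set X} {σ : Setoid X} (hσ : σ.support ⊆ A) :
    notAboveIndicator σ = ∑ π ∈ univ.filter (¬ σ.comap (↑) ≤ ·), ind A π := by
  refine PiLp.ext fun P => ?_
  simp [sum_ind_apply, notAboveIndicator, Setoid.le_iff_comap_le hσ, restrictS]

lemma notAboveIndicator_mem_U [Fintype X] {A : Set X} {σ : Setoid X} (hσ : σ.support ⊆ A) :
    notAboveIndicator σ ∈ U A := by
  rw [notAboveIndicator_eq_sum hσ]
  refine sum_mem fun π hπ => subset_span ⟨π, ?_, rfl⟩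
  rintro rfl
  exact (mem_filter.mp hπ).2 le_top

lemma ind_mem_span_upIndicator [Fintype X] (A : Set X) (ρ : Setoid A) :
    ind A ρ ∈ span ℝ (Set.range fun ρ' : Setoid A => upIndicator (ρ'.map (↑))) := by
  induction ρ using WellFoundedGT.induction with
  | _ ρ ih =>
    have hsplit : ind A ρ = upIndicator (ρ.map (↑)) - ∑ π ∈ univ.filter (ρ < ·), ind A π := by
      rw [upIndicator_map_eq_sum, eq_sub_iff_add_eq, ← sum_insert (by simp)]
      congr 1
      ext π
      simp [le_iff_eq_or_lt, eq_comm]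
    rw [hsplit]
    exact sub_mem (subset_span ⟨ρ, rfl⟩) (sum_mem fun π hπ => ih π (mem_filter.mp hπ).2)

def supportedIn (A : Set X) : Set (Setoid X) := {σ | σ ≠ ⊥ ∧ σ.support ⊆ A}

lemma notAboveIndicator_mem_span {A : Set X} {σ : Setoid X} (hσ : σ.support ⊆ A) :
    notAboveIndicator σ ∈ span ℝ (notAboveIndicator '' supportedIn A) := by
  by_cases hbot : σ = ⊥
  · rw [hbot, notAboveIndicator_bot]
    exact zero_mem _
  · exact subset_span ⟨σ, ⟨hbot, hσ⟩, rfl⟩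

lemma span_supportedIn_le_U [Fintype X] (A : Set X) :
    span ℝ (notAboveIndicator '' supportedIn A) ≤ U A :=
  span_le.mpr <| by
    rintro _ ⟨σ, ⟨-, hσ⟩, rfl⟩
    exact notAboveIndicator_mem_U hσ

lemma U_le_span_sup [Fintype X] (A : Set X) :
    U A ≤ span ℝ (notAboveIndicator '' supportedIn A) ⊔ ℝ ∙ upIndicator ⊥ := by
  refine span_le.mpr ?_
  rintro _ ⟨π, -, rfl⟩
  refine span_le.mpr (Set.range_subset_iff.mpr fun ρ => ?_) (ind_mem_span_upIndicator A π)
  rw [SetLike.mem_coe, upIndicator_eq_sub (ρ.map _)]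
  exact sub_mem (mem_sup_right (mem_span_singleton_self _))
    (mem_sup_left (notAboveIndicator_mem_span (Setoid.support_map_val_subset ρ)))

lemma apply_eq_zero_of_mem_U {A : Set X} {P : NontrivPart X} (hP : restrictS A P.1 = ⊤)
    {f : EuclideanSpace ℝ (NontrivPart X)} (hf : f ∈ U A) : f P = 0 := by
  induction hf using span_induction with
  | mem _ h =>
    obtain ⟨π, hπ, rfl⟩ := h
    simp [ind, hP, Ne.symm hπ]
  | zero => rfl
  | add _ _ _ _ h₁ h₂ => simp [h₁, h₂]
  | smul _ _ _ h => simp [h]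

lemma U_le_span_supportedIn [Fintype X] (A : Set X) :
    U A ≤ span ℝ (notAboveIndicator '' supportedIn A) := by
  by_cases hA : (⊤ : Setoid A).map Subtype.val = ⊤
  · have : upIndicator ⊥ ∈ span ℝ (notAboveIndicator '' supportedIn A) :=
      notAboveIndicator_top (X := X) ▸
        notAboveIndicator_mem_span (hA ▸ Setoid.support_map_val_subset ⊤)
    exact (U_le_span_sup A).trans (sup_le le_rfl ((span_singleton_le_iff_mem _ _).mpr this))
  · -- `P₀` restricts to the one-block partition of `A`, so `U A` vanishes at `P₀` while
    -- `upIndicator ⊥` does not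
    let P₀ : NontrivPart X := ⟨_, hA⟩
    have hP₀ : restrictS A P₀.1 = ⊤ := Setoid.comap_map_eq _ _ Subtype.val_injective
    intro f hf
    obtain ⟨g, hg, _, hz, rfl⟩ := mem_sup.mp (U_le_span_sup A hf)
    obtain ⟨r, rfl⟩ := mem_span_singleton.mp hz
    have hr : r = 0 := by
      simpa [apply_eq_zero_of_mem_U hP₀ (span_supportedIn_le_U A hg), upIndicator] using
        apply_eq_zero_of_mem_U hP₀ hf
    simpa [hr] using hg

lemma U_eq_span [Fintype X] (A : Set X) : U A = span ℝ (notAboveIndicator '' supportedIn A) :=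
  le_antisymm (U_le_span_supportedIn A) (span_supportedIn_le_U A)

lemma restrictS_univ_injective : Function.Injective (restrictS (Set.univ : Set X)) :=
  Setoid.comap_injective _ fun x => ⟨⟨x, trivial⟩, rfl⟩

lemma ind_restrictS_univ (P : NontrivPart X) :
    ind Set.univ (restrictS Set.univ P.1) = EuclideanSpace.single P 1 := by
  refine PiLp.ext fun Q => ?_
  simp only [ind, PiLp.single_apply, restrictS_univ_injective.eq_iff]
  exact if_congr Subtype.val_inj rfl rfl

lemma U_univ [Fintype X] : U (Set.univ : Set X) = ⊤ := by
  refine eq_top_iff.mpr ?_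
  rw [← (EuclideanSpace.basisFun (NontrivPart X) ℝ).toBasis.span_eq, span_le]
  rintro _ ⟨P, rfl⟩
  rw [OrthonormalBasis.coe_toBasis, EuclideanSpace.basisFun_apply, ← ind_restrictS_univ]
  refine subset_span ⟨_, fun h => P.2 (restrictS_univ_injective ?_), rfl⟩
  exact h.trans (Setoid.eq_top_iff.mpr fun _ _ => trivial).symm

lemma linearIndepOn_notAboveIndicator [Fintype X] :
    LinearIndepOn ℝ notAboveIndicator {σ : Setoid X | σ ≠ ⊥} := by
  apply linearIndependent_of_top_le_span_of_card_eq_finrank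
  · rw [← Set.image_eq_range, ← U_univ, U_eq_span]
    exact span_mono (Set.image_mono fun σ h => h.1)
  · rw [finrank_euclideanSpace]
    exact Fintype.card_congr <|
      (Equiv.swap ⊥ ⊤).subtypeEquiv fun σ => by simp [Equiv.swap_apply_eq_iff]

lemma iUnion_supportedIn_inter [Finite X] (Ea Eb : Set (Set X)) :
    (⋃ e ∈ Ea, supportedIn e) ∩ (⋃ f ∈ Eb, supportedIn f) =
      ⋃ g ∈ {g : Set X | ∃ e ∈ Ea, ∃ f ∈ Eb, g = e ∩ f ∧ 2 ≤ Nat.card ↥(e ∩ f)},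
        supportedIn g := by
  ext σ
  simp only [Set.mem_inter_iff, Set.mem_iUnion, supportedIn, exists_prop]
  constructor
  · rintro ⟨⟨e, he, hσ, hσe⟩, ⟨f, hf, -, hσf⟩⟩
    have hσef := Set.subset_inter hσe hσf
    exact ⟨e ∩ f, ⟨e, he, f, hf, rfl, Setoid.two_le_card_of_support_subset hσ hσef⟩, hσ, hσef⟩
  · rintro ⟨_, ⟨e, he, f, hf, rfl, -⟩, hσ, hσef⟩
    exact ⟨⟨e, he, hσ, hσef.trans Set.inter_subset_left⟩,
      ⟨f, hf, hσ, hσef.trans Set.inter_subset_right⟩⟩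

lemma Col_eq_span [Fintype X] (E : Set (Set X)) :
    Col E = span ℝ (notAboveIndicator '' ⋃ e ∈ E, supportedIn e) := by
  simp_rw [Col, U_eq_span, Set.image_iUnion₂, span_iUnion₂]

lemma iUnion_supportedIn_subset (E : Set (Set X)) :
    ⋃ e ∈ E, supportedIn e ⊆ {σ : Setoid X | σ ≠ ⊥} :=
  Set.iUnion₂_subset fun _ _ _ h => h.1

end Indicators

/-- `Col(H_a) ∩ Col(H_b) = Col(H_{a∧b})`, where `H_{a∧b}` has edge set
`{e ∩ f : e ∈ E_a, f ∈ E_b, |e ∩ f| ≥ 2}`; consequently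
`Col(H_{a∧b})^⊥ = Col(H_a)^⊥ + Col(H_b)^⊥`. -/
theorem stmt16 (Ea Eb : Set (Set V)) :
    Col Ea ⊓ Col Eb =
      Col {g : Set V | ∃ e ∈ Ea, ∃ f ∈ Eb, g = e ∩ f ∧ 2 ≤ Nat.card ↥(e ∩ f)} ∧
    (Col {g : Set V | ∃ e ∈ Ea, ∃ f ∈ Eb, g = e ∩ f ∧ 2 ≤ Nat.card ↥(e ∩ f)})ᗮ =
      (Col Ea)ᗮ ⊔ (Col Eb)ᗮ := by
  have hmeet : Col Ea ⊓ Col Eb =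
      Col {g : Set V | ∃ e ∈ Ea, ∃ f ∈ Eb, g = e ∩ f ∧ 2 ≤ Nat.card ↥(e ∩ f)} := by
    rw [Col_eq_span, Col_eq_span, Col_eq_span, ← iUnion_supportedIn_inter,
      linearIndepOn_notAboveIndicator.span_image_inter (iUnion_supportedIn_subset Ea)
        (iUnion_supportedIn_subset Eb)]
  exact ⟨hmeet, by rw [← hmeet, Submodule.orthogonal_inf]⟩
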